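/- Let d ≥ 5 be an integer. There exists a constant C = C(d) > 0 such that for all v, w ∈ ℤ^d: the function x ↦ ⟨v−x⟩^(2−d) · ⟨x−w⟩^(2−d) is summable over ℤ^d and ∑'_{x ∈ ℤ^d} ⟨v−x⟩^(2−d) · ⟨x−w⟩^(2−d) ≤ C · ⟨v−w⟩^(4−d). -/

import Mathlib

/-- Euclidean norm of a lattice point of `ℤ^d`. -/
noncomputable def euclNorm {d : ℕ} (x : Fin d → ℤ) : ℝ :=
  Real.sqrt (∑ i, ((x i : ℝ)) ^ 2)

/-- The "Japanese bracket" `⟨x⟩ = ‖x‖ + 1`. -/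
noncomputable def jap {d : ℕ} (x : Fin d → ℤ) : ℝ := euclNorm x + 1

/-- Sup norm of a lattice point of `ℤ^d`. -/
noncomputable def supNorm {d : ℕ} (x : Fin d → ℤ) : ℝ :=
  ((Finset.univ.sup (fun i => (x i).natAbs) : ℕ) : ℝ)

/-- The sup-norm box `B_y(M)` of radius `M` centred at `y`. -/
def latBox {d : ℕ} (y : Fin d → ℤ) (M : ℝ) : Set (Fin d → ℤ) :=
  {x | supNorm (x - y) ≤ M}

/-- The inner vertex boundary `∂B_y(M)` of the box `B_y(M)`. -/
def latBdry {d : ℕ} (y : Fin d → ℤ) (M : ℝ) : Set (Fin d → ℤ) :=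
  {x | x ∈ latBox y M ∧ ∃ x', x' ∉ latBox y M ∧ (∑ i, |x i - x' i|) = 1}

/-! Put `S = ⟨v - w⟩ / 2`. Since `⟨v - x⟩ + ⟨x - w⟩ > ⟨v - w⟩`, the larger of the two brackets is
at least `S`, so the summand is at most `K_S (v - x) + K_S (x - w)`, where
`K_S y = max(S, ⟨y⟩)^(2-d) ⟨y⟩^(2-d)` behaves like `S^(2-d) ⟨y⟩^(2-d)` inside the ball of radius `S`
and like `⟨y⟩^(4-2d)` outside it. Grouping the lattice points into sup-norm shells, of which the
`n`-th has `O(n^(d-1))` points, reduces `∑ K_S` to the one-dimensional sum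
`∑ₘ m max(S, m)^(2-d)`, which is `O(S^(4-d))` as soon as `d ≥ 5`. -/

open Finset

section

variable {d : ℕ}

noncomputable def supNatAbs (x : Fin d → ℤ) : ℕ := univ.sup fun i => (x i).natAbs

lemma supNatAbs_add_one_le_jap (x : Fin d → ℤ) : (supNatAbs x : ℝ) + 1 ≤ jap x := by
  have hcoord (i : Fin d) : |(x i : ℝ)| ≤ euclNorm x :=
    Real.abs_le_sqrt (single_le_sum (f := fun j => (x j : ℝ) ^ 2)
      (fun j _ => sq_nonneg _) (mem_univ i))
  have hsup : supNatAbs x ≤ ⌊euclNorm x⌋₊ := Finset.sup_le fun i _ =>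
    Nat.le_floor (by rw [Nat.cast_natAbs, Int.cast_abs]; exact hcoord i)
  have := (Nat.cast_le (α := ℝ)).2 hsup
  have := Nat.floor_le (Real.sqrt_nonneg (∑ i, (x i : ℝ) ^ 2))
  unfold jap euclNorm at *
  linarith

lemma jap_pos (x : Fin d → ℤ) : 0 < jap x :=
  lt_of_lt_of_le (by positivity) (supNatAbs_add_one_le_jap x)

lemma euclNorm_eq_norm (x : Fin d → ℤ) :
    euclNorm x = ‖WithLp.toLp 2 (fun i => (x i : ℝ))‖ := by
  simp [euclNorm, EuclideanSpace.norm_eq]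

lemma jap_add_add_one_le (a b : Fin d → ℤ) : jap (a + b) + 1 ≤ jap a + jap b := by
  have hadd : WithLp.toLp 2 (fun i => ((a + b) i : ℝ))
      = WithLp.toLp 2 (fun i => (a i : ℝ)) + WithLp.toLp 2 (fun i => (b i : ℝ)) := by
    ext i
    simp
  have := norm_add_le (WithLp.toLp 2 (fun i => (a i : ℝ))) (WithLp.toLp 2 (fun i => (b i : ℝ)))
  rw [← hadd] at this
  simp only [jap, euclNorm_eq_norm]
  linarith

noncomputable def supBox (d n : ℕ) : Finset (Fin d → ℤ) := Fintype.piFinset fun _ => Icc (-n : ℤ) n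

lemma mem_supBox {n : ℕ} {x : Fin d → ℤ} : x ∈ supBox d n ↔ supNatAbs x ≤ n := by
  simp only [supBox, Fintype.mem_piFinset, mem_Icc, supNatAbs, Finset.sup_le_iff, mem_univ,
    true_implies]
  exact forall_congr' fun i => by omega

lemma card_supBox (d n : ℕ) : #(supBox d n) = (2 * n + 1) ^ d := by
  simp only [supBox, Fintype.card_piFinset, Int.card_Icc, prod_const, card_univ, Fintype.card_fin]
  congr
  omega

noncomputable def supShell (d n : ℕ) : Finset (Fin d → ℤ) := {x ∈ supBox d n | supNatAbs x = n}

lemma card_supShell_le (d n : ℕ) : #(supShell d n) ≤ (2 * d + 1) * (2 * n + 1) ^ (d - 1) := by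
  cases n with
  | zero => calc
      #(supShell d 0) ≤ #(supBox d 0) := card_filter_le _ _
      _ ≤ (2 * d + 1) * (2 * 0 + 1) ^ (d - 1) := by simp [card_supBox]
  | succ n =>
    have hshell : supShell d (n + 1) ⊆ supBox d (n + 1) \ supBox d n := fun x hx => by
      simp only [supShell, mem_filter, mem_sdiff, mem_supBox] at hx ⊢
      omega
    have hbox : supBox d n ⊆ supBox d (n + 1) := fun x hx => by
      rw [mem_supBox] at hx ⊢
      omega
    have hpow := abs_pow_sub_pow_le (2 * ((n : ℤ) + 1) + 1) (2 * n + 1) d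
    have hle := (Nat.pow_le_pow_left (show 2 * n + 1 ≤ 2 * (n + 1) + 1 by omega) d)
    have := (card_le_card hshell).trans_eq (card_sdiff_of_subset hbox)
    rw [card_supBox, card_supBox] at this
    zify [hle] at this hpow ⊢
    have hmax : max |2 * ((n : ℤ) + 1) + 1| |2 * (n : ℤ) + 1| = 2 * ((n : ℤ) + 1) + 1 := by
      rw [abs_of_pos (by positivity), abs_of_pos (by positivity)]
      exact max_eq_left (by linarith)
    rw [hmax, show 2 * ((n : ℤ) + 1) + 1 - (2 * n + 1) = 2 by ring, abs_two] at hpow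
    nlinarith [le_abs_self ((2 * ((n : ℤ) + 1) + 1) ^ d - (2 * (n : ℤ) + 1) ^ d),
      pow_nonneg (show (0 : ℤ) ≤ 2 * ((n : ℤ) + 1) + 1 by positivity) (d - 1)]

lemma sum_le_sum_card_supShell_mul {k : (Fin d → ℤ) → ℝ} {b : ℕ → ℝ} (hb : ∀ n, 0 ≤ b n)
    (hk : ∀ x, k x ≤ b (supNatAbs x)) (u : Finset (Fin d → ℤ)) :
    ∑ x ∈ u, k x ≤ ∑ n ∈ range (u.sup supNatAbs + 1), #(supShell d n) * b n := by
  have hmaps : ∀ x ∈ u, supNatAbs x ∈ range (u.sup supNatAbs + 1) := fun x hx =>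
    mem_range.2 (Nat.lt_succ_of_le (le_sup hx))
  calc ∑ x ∈ u, k x
      = ∑ n ∈ range (u.sup supNatAbs + 1), ∑ x ∈ u with supNatAbs x = n, k x :=
        (sum_fiberwise_of_maps_to hmaps k).symm
    _ ≤ ∑ n ∈ range (u.sup supNatAbs + 1), ∑ x ∈ u with supNatAbs x = n, b n := by
        gcongr with n _ x hx
        exact (mem_filter.1 hx).2 ▸ hk x
    _ ≤ ∑ n ∈ range (u.sup supNatAbs + 1), #(supShell d n) * b n := by
        gcongr with n
        rw [sum_const, nsmul_eq_mul]
        gcongr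
        · exact hb n
        intro x hx
        have hx := mem_filter.1 hx
        exact mem_filter.2 ⟨mem_supBox.2 hx.2.le, hx.2⟩

lemma card_supShell_mul_rpow_le (hd : 1 ≤ d) (n : ℕ) :
    (#(supShell d n) : ℝ) * ((n : ℝ) + 1) ^ (2 - (d : ℝ))
      ≤ (2 * d + 1) * 2 ^ (d - 1) * ((n : ℝ) + 1) := by
  have hcard : (#(supShell d n) : ℝ) ≤ (2 * d + 1) * (2 ^ (d - 1) * ((n : ℝ) + 1) ^ (d - 1)) := by
    calc (#(supShell d n) : ℝ) ≤ (2 * d + 1) * (2 * n + 1) ^ (d - 1) := by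
          exact_mod_cast card_supShell_le d n
      _ ≤ _ := by
          rw [← mul_pow]
          gcongr
          linarith
  have hpow : ((n : ℝ) + 1) ^ (d - 1) * ((n : ℝ) + 1) ^ (2 - (d : ℝ)) = (n : ℝ) + 1 := by
    rw [← Real.rpow_natCast, ← Real.rpow_add (by positivity), Nat.cast_sub hd, Nat.cast_one]
    ring_nf
    exact Real.rpow_one _
  calc (#(supShell d n) : ℝ) * ((n : ℝ) + 1) ^ (2 - (d : ℝ))
      ≤ (2 * d + 1) * (2 ^ (d - 1) * ((n : ℝ) + 1) ^ (d - 1)) * ((n : ℝ) + 1) ^ (2 - (d : ℝ)) := by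
        gcongr
    _ = (2 * d + 1) * 2 ^ (d - 1) * (((n : ℝ) + 1) ^ (d - 1) * ((n : ℝ) + 1) ^ (2 - (d : ℝ))) := by
        ring
    _ = (2 * d + 1) * 2 ^ (d - 1) * ((n : ℝ) + 1) := by rw [hpow]

lemma sum_range_mul_max_rpow_le {S p : ℝ} (hS : 0 < S) (hp : 3 ≤ p) (M : ℕ) :
    ∑ m ∈ range M, ((m : ℝ) + 1) * max S ((m : ℝ) + 1) ^ (-p) ≤ 4 * S ^ (2 - p) := by
  have hterm (m : ℕ) : ((m : ℝ) + 1) * max S ((m : ℝ) + 1) ^ (-p)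
      ≤ 4 * S ^ (3 - p) * (1 / (S + m) - 1 / (S + ↑(m + 1))) := by
    set T := max S ((m : ℝ) + 1)
    have hT : 0 < T := lt_max_of_lt_left hS
    have hST : S + m + 1 ≤ 2 * T := by
      linarith [le_max_left S ((m : ℝ) + 1), le_max_right S ((m : ℝ) + 1)]
    have hpow : T ^ (3 - p) = T ^ (-p) * T ^ 3 := by
      rw [← Real.rpow_natCast, ← Real.rpow_add hT]
      ring_nf
    have htelescope : 1 / (S + m + 1) ^ 2 ≤ 1 / (S + m) - 1 / (S + ↑(m + 1)) := by
      rw [Nat.cast_succ, ← add_assoc, div_sub_div _ _ (by positivity) (by positivity)]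
      gcongr <;> nlinarith
    calc ((m : ℝ) + 1) * T ^ (-p)
        ≤ T * T ^ (-p) := by gcongr; exact le_max_right _ _
      _ = T ^ (3 - p) * (1 / T ^ 2) := by rw [hpow]; field_simp
      _ ≤ S ^ (3 - p) * (4 / (S + m + 1) ^ 2) := by
        refine mul_le_mul (Real.rpow_le_rpow_of_nonpos hS (le_max_left _ _) (by linarith)) ?_
          (by positivity) (by positivity)
        rw [div_le_div_iff₀ (by positivity) (by positivity)]
        nlinarith
      _ = 4 * S ^ (3 - p) * (1 / (S + m + 1) ^ 2) := by ring
      _ ≤ 4 * S ^ (3 - p) * (1 / (S + m) - 1 / (S + ↑(m + 1))) := by gcongr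
  calc ∑ m ∈ range M, ((m : ℝ) + 1) * max S ((m : ℝ) + 1) ^ (-p)
      ≤ ∑ m ∈ range M, 4 * S ^ (3 - p) * (1 / (S + m) - 1 / (S + ↑(m + 1))) :=
        sum_le_sum fun m _ => hterm m
    _ = 4 * S ^ (3 - p) * (1 / S - 1 / (S + M)) := by
        rw [← mul_sum, sum_range_sub' (fun m : ℕ => 1 / (S + m))]
        simp
    _ ≤ 4 * S ^ (2 - p) := by
        rw [show (2 : ℝ) - p = 3 - p - 1 by ring, Real.rpow_sub_one hS.ne']
        have : 0 ≤ 1 / (S + M) := by positivity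
        have : 0 ≤ S ^ (3 - p) := by positivity
        rw [div_eq_mul_one_div (S ^ (3 - p)) S]
        nlinarith

noncomputable def cutoffKernel (S : ℝ) (y : Fin d → ℤ) : ℝ :=
  max S (jap y) ^ (2 - (d : ℝ)) * jap y ^ (2 - (d : ℝ))

lemma cutoffKernel_nonneg (S : ℝ) (y : Fin d → ℤ) : 0 ≤ cutoffKernel S y :=
  mul_nonneg (Real.rpow_nonneg ((jap_pos y).le.trans (le_max_right _ _)) _)
    (Real.rpow_nonneg (jap_pos y).le _)

lemma sum_cutoffKernel_le (hd : 5 ≤ d) {S : ℝ} (hS : 0 < S) (u : Finset (Fin d → ℤ)) :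
    ∑ y ∈ u, cutoffKernel S y ≤ 4 * (2 * d + 1) * 2 ^ (d - 1) * S ^ (4 - (d : ℝ)) := by
  have hd' : (5 : ℝ) ≤ d := by exact_mod_cast hd
  have hk (y : Fin d → ℤ) : cutoffKernel S y
      ≤ max S ((supNatAbs y : ℝ) + 1) ^ (2 - (d : ℝ)) *
          ((supNatAbs y : ℝ) + 1) ^ (2 - (d : ℝ)) := by
    have hy := supNatAbs_add_one_le_jap y
    have hq : 2 - (d : ℝ) ≤ 0 := by linarith
    exact mul_le_mul
      (Real.rpow_le_rpow_of_nonpos (lt_max_of_lt_left hS) (max_le_max le_rfl hy) hq)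
      (Real.rpow_le_rpow_of_nonpos (by positivity) hy hq)
      (Real.rpow_nonneg (jap_pos y).le _) (Real.rpow_nonneg ((le_max_left _ _).trans' hS.le) _)
  have hshell (n : ℕ) : #(supShell d n) *
      (max S ((n : ℝ) + 1) ^ (2 - (d : ℝ)) * ((n : ℝ) + 1) ^ (2 - (d : ℝ)))
        ≤ (2 * d + 1) * 2 ^ (d - 1) * (((n : ℝ) + 1) * max S ((n : ℝ) + 1) ^ (-((d : ℝ) - 2))) := by
    rw [neg_sub]
    calc _ = #(supShell d n) * ((n : ℝ) + 1) ^ (2 - (d : ℝ)) *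
            max S ((n : ℝ) + 1) ^ (2 - (d : ℝ)) := by ring
      _ ≤ (2 * d + 1) * 2 ^ (d - 1) * ((n : ℝ) + 1) * max S ((n : ℝ) + 1) ^ (2 - (d : ℝ)) :=
          mul_le_mul_of_nonneg_right (card_supShell_mul_rpow_le (by omega) n)
            (Real.rpow_nonneg ((le_max_left _ _).trans' hS.le) _)
      _ = _ := by ring
  calc ∑ y ∈ u, cutoffKernel S y
      ≤ ∑ n ∈ range (u.sup supNatAbs + 1), #(supShell d n) *
          (max S ((n : ℝ) + 1) ^ (2 - (d : ℝ)) * ((n : ℝ) + 1) ^ (2 - (d : ℝ))) :=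
        sum_le_sum_card_supShell_mul (fun n => by positivity) hk u
    _ ≤ ∑ n ∈ range (u.sup supNatAbs + 1),
          (2 * d + 1) * 2 ^ (d - 1) * (((n : ℝ) + 1) * max S ((n : ℝ) + 1) ^ (-((d : ℝ) - 2))) :=
        sum_le_sum fun n _ => hshell n
    _ ≤ (2 * d + 1) * 2 ^ (d - 1) * (4 * S ^ (2 - ((d : ℝ) - 2))) := by
        rw [← mul_sum]
        gcongr
        exact sum_range_mul_max_rpow_le hS (by linarith) _
    _ = 4 * (2 * d + 1) * 2 ^ (d - 1) * S ^ (4 - (d : ℝ)) := by ring_nf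

lemma summable_cutoffKernel (hd : 5 ≤ d) {S : ℝ} (hS : 0 < S) :
    Summable (cutoffKernel (d := d) S) :=
  summable_of_sum_le (cutoffKernel_nonneg S) (sum_cutoffKernel_le hd hS)

lemma tsum_cutoffKernel_le (hd : 5 ≤ d) {S : ℝ} (hS : 0 < S) :
    ∑' y, cutoffKernel (d := d) S y ≤ 4 * (2 * d + 1) * 2 ^ (d - 1) * S ^ (4 - (d : ℝ)) :=
  Real.tsum_le_of_sum_le (cutoffKernel_nonneg S) (sum_cutoffKernel_le hd hS)

lemma rpow_mul_rpow_le_max_add {a b S q : ℝ} (ha : 0 < a) (hb : 0 < b) (hab : 2 * S ≤ a + b)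
    (hq : q ≤ 0) : a ^ q * b ^ q ≤ max S a ^ q * a ^ q + max S b ^ q * b ^ q := by
  wlog hba : b ≤ a generalizing a b
  · linarith [this hb ha (by linarith) (le_of_not_ge hba), mul_comm (a ^ q) (b ^ q)]
  have hmax : max S b ≤ a := max_le (by linarith) hba
  have : a ^ q ≤ max S b ^ q := Real.rpow_le_rpow_of_nonpos (lt_max_of_lt_right hb) hmax hq
  have : 0 ≤ max S a ^ q * a ^ q :=
    mul_nonneg (Real.rpow_nonneg ((le_max_right S a).trans' ha.le) q) (Real.rpow_nonneg ha.le q)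
  nlinarith [Real.rpow_nonneg hb.le q]

lemma jap_rpow_mul_le_cutoffKernel_add (hd : 2 ≤ d) (v x w : Fin d → ℤ) :
    jap (v - x) ^ (2 - (d : ℝ)) * jap (x - w) ^ (2 - (d : ℝ))
      ≤ cutoffKernel (jap (v - w) / 2) (v - x) + cutoffKernel (jap (v - w) / 2) (x - w) := by
  have htri := jap_add_add_one_le (v - x) (x - w)
  rw [sub_add_sub_cancel] at htri
  have hd' : (2 : ℝ) ≤ d := by exact_mod_cast hd
  exact rpow_mul_rpow_le_max_add (jap_pos _) (jap_pos _) (by linarith) (by linarith)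

end

theorem stmt11 (d : ℕ) (hd : 5 ≤ d) :
    ∃ C : ℝ, 0 < C ∧
      ∀ v w : Fin d → ℤ,
        Summable (fun x : Fin d → ℤ =>
            jap (v - x) ^ (2 - (d : ℝ)) * jap (x - w) ^ (2 - (d : ℝ))) ∧
          (∑' x : Fin d → ℤ, jap (v - x) ^ (2 - (d : ℝ)) * jap (x - w) ^ (2 - (d : ℝ))) ≤
            C * jap (v - w) ^ (4 - (d : ℝ)) := by
  set A : ℝ := 4 * (2 * d + 1) * 2 ^ (d - 1)
  refine ⟨2 * A / 2 ^ (4 - (d : ℝ)), by positivity, fun v w => ?_⟩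
  set S := jap (v - w) / 2 with hSdef
  have hS : 0 < S := half_pos (jap_pos _)
  have hpt (x : Fin d → ℤ) := jap_rpow_mul_le_cutoffKernel_add (by omega) v x w
  have hleft : Summable fun x => cutoffKernel S (v - x) :=
    (summable_cutoffKernel hd hS).comp_injective sub_right_injective
  have hright : Summable fun x => cutoffKernel S (x - w) :=
    (summable_cutoffKernel hd hS).comp_injective sub_left_injective
  have hf : Summable fun x => jap (v - x) ^ (2 - (d : ℝ)) * jap (x - w) ^ (2 - (d : ℝ)) :=
    (hleft.add hright).of_nonneg_of_le (fun x =>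
      mul_nonneg (Real.rpow_nonneg (jap_pos _).le _) (Real.rpow_nonneg (jap_pos _).le _)) hpt
  refine ⟨hf, ?_⟩
  calc _ ≤ ∑' x, (cutoffKernel S (v - x) + cutoffKernel S (x - w)) :=
        hf.tsum_le_tsum hpt (hleft.add hright)
    _ = 2 * ∑' y, cutoffKernel S y := by
        have e1 : ∑' x, cutoffKernel S (v - x) = ∑' y, cutoffKernel S y :=
          (Equiv.subLeft v).tsum_eq _
        have e2 : ∑' x, cutoffKernel S (x - w) = ∑' y, cutoffKernel S y :=
          (Equiv.subRight w).tsum_eq _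
        rw [hleft.tsum_add hright, e1, e2]
        ring
    _ ≤ 2 * (A * S ^ (4 - (d : ℝ))) := by gcongr; exact tsum_cutoffKernel_le hd hS
    _ = 2 * A / 2 ^ (4 - (d : ℝ)) * jap (v - w) ^ (4 - (d : ℝ)) := by
        rw [hSdef, Real.div_rpow (jap_pos _).le zero_le_two]
        ring
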